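/- Let k ≥ 2 and l ≥ 1 be integers, let D be a k×l matrix of nonnegative integers, and let C and M be as defined from D. Fix integers m ≥ 1, t ∈ {1,...,l}, and 0 ≤ s ≤ 2^m, and consider the partial block of B_{m+1} consisting of its first 2^m copies of D_1, ..., 2^m copies of D_{t−1}, followed by its first s copies of D_t. Then the number of edges (i,j) of C with both positions i and j lying in this partial block is at least binom(2^m, 2) · Σ_{j=1}^{t−1} m_{j,j} + 4^m · Σ_{i=1}^{t−2} Σ_{j=i+1}^{t−1} m_{i,j} + binom(s, 2) · m_{t,t} + s · 2^m · Σ_{i=1}^{t−1} m_{i,t}, where any sum with empty index range is 0. -/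

import Mathlib

open Filter

/-- The atom `D_j`: `d_{1,j}` copies of `1`, then `d_{2,j}` copies of `2`, …,
then `d_{k,j}` copies of `k`. -/
def atomList {k l : ℕ} (D : Fin k → Fin l → ℕ) (j : Fin l) : List ℕ :=
  (List.finRange k).flatMap fun i => List.replicate (D i j) ((i : ℕ) + 1)

/-- The block `B_m` (for `m ≥ 1`): `2^(m-1)` copies of `D_1`, then `2^(m-1)` copies
of `D_2`, …, then `2^(m-1)` copies of `D_l`, concatenated. -/
def blockList {k l : ℕ} (D : Fin k → Fin l → ℕ) (m : ℕ) : List ℕ :=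
  (List.finRange l).flatMap fun j => (List.replicate (2 ^ (m - 1)) (atomList D j)).flatten

/-- The concatenation `B_1 B_2 ⋯ B_m`. -/
def prefixList {k l : ℕ} (D : Fin k → Fin l → ℕ) (m : ℕ) : List ℕ :=
  (List.range m).flatMap fun x => blockList D (x + 1)

/-- The term `c_r` (1-indexed) of the infinite sequence `C = B_1 B_2 B_3 ⋯`. -/
def seqC {k l : ℕ} (D : Fin k → Fin l → ℕ) (r : ℕ) : ℕ :=
  (prefixList D r).getD (r - 1) 0

/-- The `(i,j)` entry `m_{i,j}` of the matrix `M`: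
`m_{i,j} = Σ_{x=1}^{k-1} d_{x,i} (Σ_{y=x+1}^{k} d_{y,j})`. -/
def Ment {k l : ℕ} (D : Fin k → Fin l → ℕ) (i j : Fin l) : ℕ :=
  ∑ x : Fin k, D x i * ∑ y ∈ Finset.Ioi x, D y j

/-- The number of edges `(i, j)` of `C` (pairs `i < j` with `c_i < c_j`) such that
`a < i ≤ b` and `c < j ≤ d` (positions are 1-indexed). -/
noncomputable def edgesBetween {k l : ℕ} (D : Fin k → Fin l → ℕ) (a b c d : ℕ) : ℕ :=
  {p : ℕ × ℕ | p.1 < p.2 ∧ a < p.1 ∧ p.1 ≤ b ∧ c < p.2 ∧ p.2 ≤ d ∧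
    seqC D p.1 < seqC D p.2}.ncard

/-- The length of the partial block of `B_{m+1}` consisting of its first `2^m` copies of
each of `D_1, …, D_{t-1}` followed by its first `s` copies of `D_t`. -/
def partialLen {k l : ℕ} (D : Fin k → Fin l → ℕ) (m : ℕ) (t : Fin l) (s : ℕ) : ℕ :=
  2 ^ m * (∑ j ∈ Finset.Iio t, (atomList D j).length) + s * (atomList D t).length

/-!
Write `edgeCount L` for the number of edges of a finite word `L` and `crossEdgeCount A B` for
the number of pairs `a ∈ A`, `b ∈ B` with `a < b`. Then
`edgeCount (A ++ B) = edgeCount A + edgeCount B + crossEdgeCount A B`, `crossEdgeCount` is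
additive in both arguments, and `crossEdgeCount D_i D_j = m_{i,j}`. Expanding the partial block
`D_1^{2^m} ⋯ D_{t-1}^{2^m} D_t^s` along these rules, each pair of copies of the same atom `D_j`
contributes `m_{j,j}` and each copy of `D_i` followed by a copy of `D_j` contributes `m_{i,j}`;
only the edges inside single copies of atoms are dropped. Finally the partial block is read
off `C` right after `B_1 ⋯ B_m`, so its edges are exactly the edges of `C` in that window.
-/

open Finset

theorem List.countP_eq_sum_range (p : ℕ → Bool) (L : List ℕ) :
    L.countP p = ∑ j ∈ Finset.range L.length, if p (L.getD j 0) then 1 else 0 := by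
  induction L with
  | nil => rfl
  | cons a L ih =>
    rw [List.countP_cons, ih, List.length_cons, Finset.sum_range_succ']
    simp [add_comm]

theorem List.IsPrefix.getD_eq {α : Type*} {xs ys : List α} (h : xs <+: ys) {i : ℕ}
    (hi : i < xs.length) (d : α) : xs.getD i d = ys.getD i d := by
  obtain ⟨w, rfl⟩ := h
  exact (List.getD_append _ _ _ _ hi).symm

theorem Fin.sum_Iio_val {M : Type*} [AddCommMonoid M] {n : ℕ} (t : Fin n) (g : ℕ → M) :
    ∑ j ∈ Iio t, g j = ∑ i ∈ range t, g i := by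
  rw [← Nat.Iio_eq_range, ← Fin.map_valEmbedding_Iio, sum_map]
  rfl

theorem Fin.sum_Iio_sum_Ioo_val {M : Type*} [AddCommMonoid M] {n : ℕ} (t : Fin n)
    (g : ℕ → ℕ → M) :
    ∑ i ∈ Iio t, ∑ j ∈ Ioo i t, g i j = ∑ i ∈ range t, ∑ j ∈ Ioo i (t : ℕ), g i j := by
  rw [← Fin.sum_Iio_val t fun i => ∑ j ∈ Ioo i (t : ℕ), g i j]
  refine sum_congr rfl fun i _ => ?_
  rw [← Fin.map_valEmbedding_Ioo, sum_map]
  rfl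

theorem sum_range_succ_sum_Ioo {M : Type*} [AddCommMonoid M] (f : ℕ → ℕ → M) (n : ℕ) :
    ∑ i ∈ range (n + 1), ∑ j ∈ Ioo i (n + 1), f i j =
      ∑ i ∈ range n, ∑ j ∈ Ioo i n, f i j + ∑ i ∈ range n, f i n := by
  rw [sum_range_succ, Ioo_add_one_right_eq_Ioc, Ioc_self, sum_empty, add_zero,
    ← sum_add_distrib]
  refine sum_congr rfl fun i hi => ?_
  rw [Ioo_add_one_right_eq_Ioc, ← Ioo_insert_right (mem_range.mp hi), sum_insert (by simp),
    add_comm]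

def edgeCount (L : List ℕ) : ℕ :=
  #{p ∈ range L.length ×ˢ range L.length | p.1 < p.2 ∧ L.getD p.1 0 < L.getD p.2 0}

def crossEdgeCount (A B : List ℕ) : ℕ :=
  (A.map fun a => B.countP (a < ·)).sum

theorem edgeCount_cons (a : ℕ) (L : List ℕ) :
    edgeCount (a :: L) = L.countP (a < ·) + edgeCount L := by
  simp only [edgeCount, card_filter, sum_product, List.length_cons, sum_range_succ',
    List.getD_cons_succ, List.getD_cons_zero, List.countP_eq_sum_range]
  simp [add_comm]

theorem crossEdgeCount_cons_left (a : ℕ) (A B : List ℕ) :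
    crossEdgeCount (a :: A) B = B.countP (a < ·) + crossEdgeCount A B := by
  simp [crossEdgeCount]

theorem crossEdgeCount_append_left (A₁ A₂ B : List ℕ) :
    crossEdgeCount (A₁ ++ A₂) B = crossEdgeCount A₁ B + crossEdgeCount A₂ B := by
  simp [crossEdgeCount]

theorem crossEdgeCount_append_right (A B₁ B₂ : List ℕ) :
    crossEdgeCount A (B₁ ++ B₂) = crossEdgeCount A B₁ + crossEdgeCount A B₂ := by
  simp [crossEdgeCount, List.sum_map_add]

theorem crossEdgeCount_replicate_left (n a : ℕ) (B : List ℕ) :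
    crossEdgeCount (List.replicate n a) B = n * B.countP (a < ·) := by
  simp [crossEdgeCount]

theorem crossEdgeCount_flatMap_left {α : Type*} (xs : List α) (f : α → List ℕ) (B : List ℕ) :
    crossEdgeCount (xs.flatMap f) B = (xs.map fun x => crossEdgeCount (f x) B).sum := by
  induction xs with
  | nil => rfl
  | cons x xs ih =>
    rw [List.flatMap_cons, crossEdgeCount_append_left, ih, List.map_cons, List.sum_cons]

theorem crossEdgeCount_flatten_replicate_left (n : ℕ) (A B : List ℕ) :
    crossEdgeCount (List.replicate n A).flatten B = n * crossEdgeCount A B := by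
  induction n with
  | zero => simp [crossEdgeCount]
  | succ n ih =>
    rw [List.replicate_succ, List.flatten_cons, crossEdgeCount_append_left, ih, add_mul, add_comm,
      one_mul]

theorem crossEdgeCount_flatten_replicate_right (n : ℕ) (A B : List ℕ) :
    crossEdgeCount A (List.replicate n B).flatten = n * crossEdgeCount A B := by
  induction n with
  | zero => simp [crossEdgeCount]
  | succ n ih =>
    rw [List.replicate_succ, List.flatten_cons, crossEdgeCount_append_right, ih, add_mul,
      add_comm, one_mul]

theorem edgeCount_append (A B : List ℕ) :
    edgeCount (A ++ B) = edgeCount A + edgeCount B + crossEdgeCount A B := by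
  induction A with
  | nil => simp [edgeCount, crossEdgeCount]
  | cons a A ih =>
    rw [List.cons_append, edgeCount_cons, edgeCount_cons, ih, crossEdgeCount_cons_left,
      List.countP_append]
    ring

theorem le_edgeCount_flatten_replicate (n : ℕ) (A : List ℕ) :
    n.choose 2 * crossEdgeCount A A ≤ edgeCount (List.replicate n A).flatten := by
  induction n with
  | zero => simp
  | succ n ih =>
    rw [List.replicate_succ, List.flatten_cons, edgeCount_append,
      crossEdgeCount_flatten_replicate_right, Nat.choose_succ_succ', Nat.choose_one_right]
    linarith

section CopiesOfAtoms

variable (A : ℕ → List ℕ) (c : ℕ)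

def blockOfCopies (n : ℕ) : List ℕ :=
  (List.range n).flatMap fun i => (List.replicate c (A i)).flatten

def partialBlock (t s : ℕ) : List ℕ :=
  blockOfCopies A c t ++ (List.replicate s (A t)).flatten

theorem blockOfCopies_succ (n : ℕ) :
    blockOfCopies A c (n + 1) = blockOfCopies A c n ++ (List.replicate c (A n)).flatten := by
  simp [blockOfCopies, List.range_succ]

theorem blockOfCopies_prefix_of_le {a b : ℕ} (h : a ≤ b) :
    blockOfCopies A c a <+: blockOfCopies A c b := by
  obtain ⟨d, rfl⟩ := Nat.exists_eq_add_of_le h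
  rw [blockOfCopies, blockOfCopies, List.range_add, List.flatMap_append]
  exact List.prefix_append _ _

theorem partialBlock_prefix {t s n : ℕ} (hs : s ≤ c) (ht : t < n) :
    partialBlock A c t s <+: blockOfCopies A c n := by
  refine List.IsPrefix.trans ?_ (blockOfCopies_prefix_of_le A c ht)
  obtain ⟨d, rfl⟩ := Nat.exists_eq_add_of_le hs
  rw [partialBlock, blockOfCopies_succ, List.replicate_add, List.flatten_append,
    ← List.append_assoc]
  exact List.prefix_append _ _

theorem length_blockOfCopies (n : ℕ) :
    (blockOfCopies A c n).length = c * ∑ i ∈ range n, (A i).length := by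
  induction n with
  | zero => simp [blockOfCopies]
  | succ n ih => simp [blockOfCopies_succ, ih, sum_range_succ, mul_add]

theorem length_partialBlock (t s : ℕ) :
    (partialBlock A c t s).length = c * ∑ i ∈ range t, (A i).length + s * (A t).length := by
  simp [partialBlock, length_blockOfCopies]

theorem crossEdgeCount_blockOfCopies_left (n : ℕ) (B : List ℕ) :
    crossEdgeCount (blockOfCopies A c n) B = c * ∑ i ∈ range n, crossEdgeCount (A i) B := by
  induction n with
  | zero => simp [blockOfCopies, crossEdgeCount]
  | succ n ih =>
    rw [blockOfCopies_succ, crossEdgeCount_append_left, ih, crossEdgeCount_flatten_replicate_left,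
      sum_range_succ, mul_add]

theorem le_edgeCount_blockOfCopies (n : ℕ) :
    c.choose 2 * ∑ i ∈ range n, crossEdgeCount (A i) (A i) +
        c * c * ∑ i ∈ range n, ∑ j ∈ Ioo i n, crossEdgeCount (A i) (A j) ≤
      edgeCount (blockOfCopies A c n) := by
  induction n with
  | zero => simp [blockOfCopies, edgeCount]
  | succ n ih =>
    have hlast := le_edgeCount_flatten_replicate c (A n)
    simp only [blockOfCopies_succ, edgeCount_append, crossEdgeCount_blockOfCopies_left,
      crossEdgeCount_flatten_replicate_right]
    rw [sum_range_succ_sum_Ioo, sum_range_succ]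
    linarith

theorem le_edgeCount_partialBlock (t s : ℕ) :
    c.choose 2 * ∑ i ∈ range t, crossEdgeCount (A i) (A i) +
        c * c * ∑ i ∈ range t, ∑ j ∈ Ioo i t, crossEdgeCount (A i) (A j) +
        s.choose 2 * crossEdgeCount (A t) (A t) +
        s * c * ∑ i ∈ range t, crossEdgeCount (A i) (A t) ≤
      edgeCount (partialBlock A c t s) := by
  have hblock := le_edgeCount_blockOfCopies A c t
  have hlast := le_edgeCount_flatten_replicate s (A t)
  simp only [partialBlock, edgeCount_append, crossEdgeCount_blockOfCopies_left,
    crossEdgeCount_flatten_replicate_right]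
  linarith

end CopiesOfAtoms

section SequenceC

variable {k l : ℕ} (D : Fin k → Fin l → ℕ)

theorem countP_lt_atomList (x : Fin k) (j : Fin l) :
    (atomList D j).countP (((x : ℕ) + 1) < ·) = ∑ y ∈ Ioi x, D y j := by
  simp [atomList, List.countP_flatMap, ← Fin.sum_univ_def, Function.comp_def,
    List.countP_replicate, Finset.sum_ite, Finset.filter_lt_eq_Ioi]

theorem crossEdgeCount_atomList (i j : Fin l) :
    crossEdgeCount (atomList D i) (atomList D j) = Ment D i j := by
  rw [atomList, crossEdgeCount_flatMap_left, ← Fin.sum_univ_def]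
  simp only [crossEdgeCount_replicate_left, countP_lt_atomList, Ment]

/-- The atoms indexed by `ℕ`, padded with empty atoms from `l` on, so that blocks can be
built by recursion on the number of atoms. -/
def atomListNat (i : ℕ) : List ℕ :=
  if h : i < l then atomList D ⟨i, h⟩ else []

theorem atomListNat_val (j : Fin l) : atomListNat D j = atomList D j := by
  simp [atomListNat]

theorem blockList_succ (m : ℕ) :
    blockList D (m + 1) = blockOfCopies (atomListNat D) (2 ^ m) l := by
  rw [blockList, blockOfCopies, ← List.map_coe_finRange_eq_range, List.flatMap_map]
  simp [atomListNat_val]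

theorem prefixList_succ (n : ℕ) :
    prefixList D (n + 1) = prefixList D n ++ blockList D (n + 1) := by
  simp [prefixList, List.range_succ]

theorem prefixList_prefix_of_le {a b : ℕ} (h : a ≤ b) : prefixList D a <+: prefixList D b := by
  obtain ⟨d, rfl⟩ := Nat.exists_eq_add_of_le h
  rw [prefixList, prefixList, List.range_add, List.flatMap_append]
  exact List.prefix_append _ _

theorem length_prefixList (n : ℕ) :
    (prefixList D n).length = (2 ^ n - 1) * ∑ j, (atomList D j).length := by
  induction n with
  | zero => simp [prefixList]
  | succ n ih =>
    rw [prefixList_succ, List.length_append, ih, blockList_succ, length_blockOfCopies,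
      ← Fin.sum_univ_eq_sum_range (fun i => (atomListNat D i).length)]
    simp only [atomListNat_val, ← add_mul]
    have := Nat.one_le_two_pow (n := n)
    rw [pow_succ]
    congr 1
    omega

/-- `seqC D r` reads position `r` off `prefixList D r`; this is consistent with every longer
prefix because `prefixList D r` has length `(2^r - 1) · Σ_j |D_j| ≥ r` once some atom is
nonempty. -/
theorem seqC_eq_getD_prefixList {n r : ℕ} (hr : 0 < r) (hrn : r ≤ (prefixList D n).length) :
    seqC D r = (prefixList D n).getD (r - 1) 0 := by
  rw [seqC]
  rcases le_total n r with hnr | hrn'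
  · exact ((prefixList_prefix_of_le D hnr).getD_eq (by omega) 0).symm
  · have hA : 0 < ∑ j, (atomList D j).length := by
      rw [length_prefixList] at hrn
      exact Nat.pos_of_ne_zero fun h => by simp [h] at hrn; omega
    have hr' : r - 1 < (prefixList D r).length := by
      rw [length_prefixList]
      have := Nat.lt_two_pow_self (n := r)
      exact lt_of_lt_of_le (by omega) (Nat.le_mul_of_pos_right _ hA)
    exact (prefixList_prefix_of_le D hrn').getD_eq hr' 0

theorem seqC_eq_getD_of_prefix_blockList {m : ℕ} {S : List ℕ} (hS : S <+: blockList D (m + 1))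
    {i : ℕ} (hi : i < S.length) : seqC D ((prefixList D m).length + i + 1) = S.getD i 0 := by
  have hSlen := hS.length_le
  rw [seqC_eq_getD_prefixList D (n := m + 1) (by omega)
      (by rw [prefixList_succ, List.length_append]; omega),
    prefixList_succ, Nat.add_sub_cancel, List.getD_append_right _ _ _ _ (by omega),
    Nat.add_sub_cancel_left, hS.getD_eq hi]

theorem edgesBetween_eq_edgeCount {L : ℕ} {S : List ℕ}
    (hS : ∀ i < S.length, seqC D (L + i + 1) = S.getD i 0) :
    edgesBetween D L (L + S.length) L (L + S.length) = edgeCount S := by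
  have hshift : Function.Injective fun p : ℕ × ℕ => (L + p.1 + 1, L + p.2 + 1) := by
    rintro ⟨i, j⟩ ⟨i', j'⟩ h
    simp only [Prod.mk.injEq] at h ⊢
    omega
  suffices hset : {p : ℕ × ℕ | p.1 < p.2 ∧ L < p.1 ∧ p.1 ≤ L + S.length ∧ L < p.2 ∧
      p.2 ≤ L + S.length ∧ seqC D p.1 < seqC D p.2} =
      (fun p : ℕ × ℕ => (L + p.1 + 1, L + p.2 + 1)) '' ↑({p ∈ range S.length ×ˢ range S.length |
        p.1 < p.2 ∧ S.getD p.1 0 < S.getD p.2 0} : Finset (ℕ × ℕ)) by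
    rw [edgesBetween, hset, Set.ncard_image_of_injective _ hshift, Set.ncard_coe_finset, edgeCount]
  ext ⟨a, b⟩
  simp only [Set.mem_ofPred_eq, Set.mem_image, coe_filter, mem_product, mem_range, Prod.mk.injEq]
  constructor
  · rintro ⟨hab, ha, ha', hb, hb', hlt⟩
    refine ⟨(a - L - 1, b - L - 1), ⟨⟨by omega, by omega⟩, by omega, ?_⟩, by omega, by omega⟩
    rwa [← hS _ (by omega), ← hS _ (by omega), show L + (a - L - 1) + 1 = a by omega,
      show L + (b - L - 1) + 1 = b by omega]
  · rintro ⟨⟨i, j⟩, ⟨⟨hi, hj⟩, hij, hlt⟩, rfl, rfl⟩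
    refine ⟨by omega, by omega, by omega, by omega, by omega, ?_⟩
    rwa [hS i hi, hS j hj]

end SequenceC

theorem edges_within_partial_block_general (k l : ℕ)
    (D : Fin k → Fin l → ℕ) (m : ℕ) (t : Fin l) (s : ℕ) (hs : s ≤ 2 ^ m) :
    Nat.choose (2 ^ m) 2 * (∑ j ∈ Finset.Iio t, Ment D j j) +
        4 ^ m * (∑ i ∈ Finset.Iio t, ∑ j ∈ Finset.Ioo i t, Ment D i j) +
        Nat.choose s 2 * Ment D t t +
        s * 2 ^ m * (∑ i ∈ Finset.Iio t, Ment D i t) ≤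
      edgesBetween D (prefixList D m).length ((prefixList D m).length + partialLen D m t s)
        (prefixList D m).length ((prefixList D m).length + partialLen D m t s) := by
  have hM : ∀ i j : Fin l, Ment D i j = crossEdgeCount (atomListNat D i) (atomListNat D j) :=
    fun i j => by rw [atomListNat_val, atomListNat_val, crossEdgeCount_atomList]
  have hS : partialBlock (atomListNat D) (2 ^ m) t s <+: blockList D (m + 1) := by
    rw [blockList_succ]
    exact partialBlock_prefix _ _ hs t.isLt
  have hlen : (partialBlock (atomListNat D) (2 ^ m) t s).length = partialLen D m t s := by
    rw [length_partialBlock, partialLen, ← Fin.sum_Iio_val t fun i => (atomListNat D i).length]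
    simp only [atomListNat_val]
  rw [← hlen, edgesBetween_eq_edgeCount D fun i hi => seqC_eq_getD_of_prefix_blockList D hS hi]
  refine le_of_eq_of_le ?_ (le_edgeCount_partialBlock (atomListNat D) (2 ^ m) t s)
  simp only [hM, Fin.sum_Iio_val t fun i => crossEdgeCount (atomListNat D i) (atomListNat D i),
    Fin.sum_Iio_val t fun i => crossEdgeCount (atomListNat D i) (atomListNat D t),
    Fin.sum_Iio_sum_Ioo_val t fun i j => crossEdgeCount (atomListNat D i) (atomListNat D j),
    show 4 ^ m = 2 ^ m * 2 ^ m by rw [← mul_pow]; norm_num]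

/-- Lemma 3.5: the number of edges of `C` with both positions in the partial block of
`B_{m+1}` (its first `2^m` copies of each of `D_1, …, D_{t-1}` followed by its first
`s` copies of `D_t`) is at least
`C(2^m,2) Σ_{j=1}^{t-1} m_{j,j} + 4^m Σ_{i=1}^{t-2} Σ_{j=i+1}^{t-1} m_{i,j}
  + C(s,2) m_{t,t} + s 2^m Σ_{i=1}^{t-1} m_{i,t}`. -/
theorem edges_within_partial_block (k l : ℕ) (hk : 2 ≤ k) (hl : 1 ≤ l)
    (D : Fin k → Fin l → ℕ) (m : ℕ) (hm : 1 ≤ m) (t : Fin l) (s : ℕ) (hs : s ≤ 2 ^ m) :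
    Nat.choose (2 ^ m) 2 * (∑ j ∈ Finset.Iio t, Ment D j j) +
        4 ^ m * (∑ i ∈ Finset.Iio t, ∑ j ∈ Finset.Ioo i t, Ment D i j) +
        Nat.choose s 2 * Ment D t t +
        s * 2 ^ m * (∑ i ∈ Finset.Iio t, Ment D i t) ≤
      edgesBetween D (prefixList D m).length ((prefixList D m).length + partialLen D m t s)
        (prefixList D m).length ((prefixList D m).length + partialLen D m t s) :=
  edges_within_partial_block_general k l D m t s hs
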